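/- Let (E^•, 𝔼^0, 𝔼^1, …) be a graded module over a graded algebra with operators 𝔼^i of total degree 1 satisfying Σ_{i=0}^{k} 𝔼^i 𝔼^{k−i} = 0 for all k ≤ n, and suppose D := Σ_{i=1}^{n} 𝔼^i 𝔼^{n+1−i} satisfies [𝔼^0, D] = 0. Then D is a cycle for the differential [𝔼^0, −] on the endomorphism complex, i.e. 𝔼^0 D + D 𝔼^0 = 0 (taking appropriate signs in the graded commutator). -/
import Mathlib


/-- **The obstruction is a cycle.**  Let `𝔼⁰, 𝔼¹, 𝔼², …` be operators (of total degree
one) on a graded module, viewed as elements of the endomorphism algebra `A`, satisfying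
the ℤ-connection quadratic relations `Σ_{i=0}^{k} 𝔼^i 𝔼^{k-i} = 0` for all `k ≤ n`.
Then the obstruction `D := Σ_{i=1}^{n} 𝔼^i 𝔼^{n+1-i}` is a cycle for the differential
`[𝔼⁰, -]` on the endomorphism complex: the graded commutator (with the appropriate
signs) of `𝔼⁰` with `D` vanishes, `𝔼⁰ D - D 𝔼⁰ = 0`. -/
theorem obstruction_is_cycle
    (A : Type*) [Ring A] (E : ℕ → A) (n : ℕ)
    (hrel : ∀ k ≤ n, ∑ i ∈ Finset.range (k + 1), E i * E (k - i) = 0) :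
    E 0 * (∑ i ∈ Finset.Icc 1 n, E i * E (n + 1 - i)) -
      (∑ i ∈ Finset.Icc 1 n, E i * E (n + 1 - i)) * E 0 = 0 := by
  -- rewrite the Icc-sum as a range-sum
  have hD : (∑ i ∈ Finset.Icc 1 n, E i * E (n + 1 - i))
      = ∑ i ∈ Finset.range n, E (i + 1) * E (n - i) := by
    apply Finset.sum_nbij' (fun i => i - 1) (fun i => i + 1)
    · intro a ha; simp only [Finset.mem_Icc] at ha; simp only [Finset.mem_range]; omega
    · intro a ha; simp only [Finset.mem_range] at ha; simp only [Finset.mem_Icc]; omega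
    · intro a ha; simp only [Finset.mem_Icc] at ha; omega
    · intro a ha; simp only [Finset.mem_range] at ha; omega
    · intro a ha; simp only [Finset.mem_Icc] at ha; congr 2 <;> omega
  rw [hD]
  -- E0 * E (i+1) = - ∑_{j < i+1} E (j+1) * E (i-j)
  have hL : ∀ i ∈ Finset.range n, E 0 * E (i + 1)
      = -∑ j ∈ Finset.range (i + 1), E (j + 1) * E (i - j) := by
    intro i hi
    simp only [Finset.mem_range] at hi
    have h := hrel (i + 1) (by omega)
    rw [Finset.sum_range_succ'] at h
    have e : ∀ j, i + 1 - (j + 1) = i - j := fun j => by omega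
    simp only [e, Nat.sub_zero] at h
    rw [add_comm] at h
    exact eq_neg_of_add_eq_zero_left h
  -- E (n-i) * E 0 = - ∑_{j < n-i} E j * E (n-i-j)
  have hR : ∀ i ∈ Finset.range n, E (n - i) * E 0
      = -∑ j ∈ Finset.range (n - i), E j * E (n - i - j) := by
    intro i hi
    have h := hrel (n - i) (by omega)
    rw [Finset.sum_range_succ, Nat.sub_self] at h
    rw [add_comm] at h
    exact eq_neg_of_add_eq_zero_left h
  rw [Finset.mul_sum, Finset.sum_mul]
  have e1 : ∀ i ∈ Finset.range n, E 0 * (E (i + 1) * E (n - i))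
      = -∑ j ∈ Finset.range (i + 1), E (j + 1) * E (i - j) * E (n - i) := by
    intro i hi
    rw [← mul_assoc, hL i hi, neg_mul, Finset.sum_mul]
  have e2 : ∀ i ∈ Finset.range n, E (i + 1) * E (n - i) * E 0
      = -∑ j ∈ Finset.range (n - i), E (i + 1) * (E j * E (n - i - j)) := by
    intro i hi
    rw [mul_assoc, hR i hi, mul_neg, Finset.mul_sum]
  rw [Finset.sum_congr rfl e1, Finset.sum_congr rfl e2, Finset.sum_neg_distrib,
    Finset.sum_neg_distrib, sub_neg_eq_add, neg_add_eq_zero]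
  rw [Finset.sum_sigma', Finset.sum_sigma']
  apply Finset.sum_nbij' (fun p => (⟨p.2, p.1 - p.2⟩ : (_ : ℕ) × ℕ))
    (fun p => (⟨p.1 + p.2, p.1⟩ : (_ : ℕ) × ℕ))
  · rintro ⟨i, j⟩ h
    simp only [Finset.mem_sigma, Finset.mem_range] at h ⊢
    omega
  · rintro ⟨i, j⟩ h
    simp only [Finset.mem_sigma, Finset.mem_range] at h ⊢
    omega
  · rintro ⟨i, j⟩ h
    simp only [Finset.mem_sigma, Finset.mem_range] at h
    simp only [Sigma.mk.inj_iff, heq_eq_eq]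
    exact ⟨by omega, trivial⟩
  · rintro ⟨i, j⟩ h
    simp only [Finset.mem_sigma, Finset.mem_range] at h
    simp only [Sigma.mk.inj_iff, heq_eq_eq]
    exact ⟨trivial, by omega⟩
  · rintro ⟨i, j⟩ h
    simp only [Finset.mem_sigma, Finset.mem_range] at h
    dsimp only
    rw [show n - j - (i - j) = n - i by omega, ← mul_assoc]
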